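/- Let d ≥ 1 be an integer and let β ∈ (0, d). There exists a constant C > 0, depending only on d and β, such that for all t₁, t₂ > 0, all R > 0, and all ỹ, z̃ ∈ ℝ^d with ỹ ≠ z̃, ∫_{Q_R} ∫_{ℝ^d} ∫_{ℝ^d} p_{t₁}(x − y) p_{t₂}(z − ỹ) ‖y − ỹ‖^{−β} ‖z − z̃‖^{−β} dz dy dx ≤ C ‖ỹ − z̃‖^{−β} R^{d−β}. -/

import Mathlib

open MeasureTheory

noncomputable def heatKernel (d : ℕ) (t : ℝ) (x : EuclideanSpace ℝ (Fin d)) : ℝ :=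
  (2 * Real.pi * t) ^ (-(d : ℝ) / 2) * Real.exp (-‖x‖ ^ 2 / (2 * t))

def box (d : ℕ) (R : ℝ) : Set (EuclideanSpace ℝ (Fin d)) :=
  {x | ∀ i, |x i| ≤ R}

/-!
Integrating out `z` and then `y`, the triple integral factorises as
`(∫_{Q_R} (p_{t₁} ∗ ‖· - ỹ‖^{-β})(x) dx) · (p_{t₂} ∗ ‖· - z̃‖^{-β})(ỹ)`.
The heat semigroup preserves the Riesz kernel up to a constant independent of `t`:
`(p_t ∗ ‖· - b‖^{-β})(a) ≤ C ‖a - b‖^{-β}`. Indeed, with `r = ‖a - b‖ / 2`, on `B(b, r)` the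
Gaussian is at most `C r^{-d}` (because `u^{d/2} e^{-u}` is bounded) while the Riesz kernel has
mass `C r^{d-β}` there, and off `B(b, r)` the Riesz kernel is at most `r^{-β}` while the Gaussian
has mass one. It remains that `∫_{Q_R} ‖x - a‖^{-β} dx ≤ C R^{d-β}`, by splitting `Q_R` along
`B(a, R)`; the Riesz mass of a ball is computed in polar coordinates.
-/

open Set Metric Real

lemma Real.rpow_le_rpow_mul_exp {u k : ℝ} (hu : 0 ≤ u) (hk : 0 < k) : u ^ k ≤ k ^ k * exp u := by
  have hlin : u / k ≤ exp (u / k) := (le_add_of_nonneg_right zero_le_one).trans (add_one_le_exp _)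
  calc u ^ k = k ^ k * (u / k) ^ k := by
        rw [← mul_rpow hk.le (by positivity), mul_div_cancel₀ _ hk.ne']
    _ ≤ k ^ k * exp (u / k) ^ k := by gcongr
    _ = k ^ k * exp u := by rw [← exp_mul, div_mul_cancel₀ _ hk.ne']

lemma Real.pow_sub_one_mul_rpow {n : ℕ} (hn : n ≠ 0) {y : ℝ} (hy : 0 < y) (s : ℝ) :
    y ^ (n - 1) * y ^ s = y ^ ((n : ℝ) - 1 + s) := by
  rw [← rpow_natCast, ← rpow_add hy, Nat.cast_sub (Nat.one_le_iff_ne_zero.2 hn), Nat.cast_one]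

lemma setIntegral_Ioi_pow_smul_indicator_Iio_rpow_neg {n : ℕ} (hn : n ≠ 0) {β r : ℝ}
    (hβ : β < n) (hr : 0 ≤ r) :
    ∫ y in Ioi (0 : ℝ), y ^ (n - 1) • (Iio r).indicator (· ^ (-β)) y
      = r ^ ((n : ℝ) - β) / (n - β) := by
  calc ∫ y in Ioi (0 : ℝ), y ^ (n - 1) • (Iio r).indicator (· ^ (-β)) y
      = ∫ y in Ioi (0 : ℝ), (Iio r).indicator (fun y => y ^ (n - 1) * y ^ (-β)) y := by
        congr 1 with y
        by_cases hy : y < r <;> simp [hy]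
    _ = ∫ y in Ioo 0 r, y ^ ((n : ℝ) - 1 + -β) := by
        rw [setIntegral_indicator measurableSet_Iio, Ioi_inter_Iio]
        exact setIntegral_congr_fun measurableSet_Ioo
          fun y hy => pow_sub_one_mul_rpow hn hy.1 (-β)
    _ = r ^ ((n : ℝ) - β) / (n - β) := by
        rw [← integral_Ioc_eq_integral_Ioo, ← intervalIntegral.integral_of_le hr,
          integral_rpow (Or.inl (by linarith)), zero_rpow (by linarith)]
        ring_nf

lemma indicator_ball_comp_sub {E F : Type*} [SeminormedAddCommGroup E] [Zero F] (g : E → F)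
    (c : E) (r : ℝ) :
    ((ball c r).indicator fun x => g (x - c)) = fun x => (ball 0 r).indicator g (x - c) := by
  funext x
  simp [indicator, dist_eq_norm]

section Riesz

variable {E : Type*} [NormedAddCommGroup E] [NormedSpace ℝ E] [FiniteDimensional ℝ E]
  [MeasurableSpace E] [BorelSpace E] (μ : Measure E) [μ.IsAddHaarMeasure] {β : ℝ}

local notation "dim" => Module.finrank ℝ E

lemma integrableOn_ball_norm_sub_rpow_neg (hβ : 0 < β) (hβE : β < dim) (c : E) {r : ℝ}
    (hr : 0 < r) : IntegrableOn (fun x => ‖x - c‖ ^ (-β)) (ball c r) μ := by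
  have hdim : dim ≠ 0 := (Nat.cast_pos.mp (hβ.trans hβE)).ne'
  have : Nontrivial E := Module.nontrivial_of_finrank_pos (Nat.pos_of_ne_zero hdim)
  have h0 : IntegrableOn (fun x : E => ‖x‖ ^ (-β)) (ball 0 r) μ := by
    rw [integrableOn_fun_norm_addHaar μ (f := fun y => y ^ (-β))]
    simp only [smul_eq_mul]
    rw [integrableOn_congr_fun (fun y hy => pow_sub_one_mul_rpow hdim hy.1 (-β))
      measurableSet_Ioo, intervalIntegral.integrableOn_Ioo_rpow_iff hr]
    linarith
  rw [← integrable_indicator_iff measurableSet_ball] at h0 ⊢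
  rw [indicator_ball_comp_sub (‖·‖ ^ (-β))]
  exact h0.comp_sub_right c

lemma setIntegral_ball_norm_sub_rpow_neg (hβ : 0 < β) (hβE : β < dim) (c : E) {r : ℝ}
    (hr : 0 ≤ r) :
    ∫ x in ball c r, ‖x - c‖ ^ (-β) ∂μ
      = dim / (dim - β) * μ.real (ball 0 1) * r ^ ((dim : ℝ) - β) := by
  have hdim : dim ≠ 0 := (Nat.cast_pos.mp (hβ.trans hβE)).ne'
  have : Nontrivial E := Module.nontrivial_of_finrank_pos (Nat.pos_of_ne_zero hdim)
  have hball : ∫ x in ball 0 r, ‖x‖ ^ (-β) ∂μ = ∫ x, (Iio r).indicator (· ^ (-β)) ‖x‖ ∂μ := by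
    rw [← integral_indicator measurableSet_ball]
    congr 1 with x
    simp [indicator]
  rw [← integral_indicator measurableSet_ball, indicator_ball_comp_sub (‖·‖ ^ (-β)),
    integral_sub_right_eq_self (fun x => (ball 0 r).indicator (‖·‖ ^ (-β)) x) c,
    integral_indicator measurableSet_ball, hball, integral_fun_norm_addHaar,
    setIntegral_Ioi_pow_smul_indicator_Iio_rpow_neg hdim hβE hr, nsmul_eq_mul, smul_eq_mul]
  ring

end Riesz

section Euclidean

variable {d : ℕ} {β : ℝ}

lemma heatKernel_nonneg {t : ℝ} (ht : 0 < t) (w : EuclideanSpace ℝ (Fin d)) :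
    0 ≤ heatKernel d t w := by
  unfold heatKernel
  positivity

lemma heatKernel_sub_comm (t : ℝ) (x y : EuclideanSpace ℝ (Fin d)) :
    heatKernel d t (x - y) = heatKernel d t (y - x) := by
  rw [heatKernel, heatKernel, norm_sub_rev]

lemma heatKernel_eq_gaussian (t : ℝ) :
    heatKernel d t = fun w => (2 * π * t) ^ (-(d : ℝ) / 2) * exp (-(2 * t)⁻¹ * ‖w‖ ^ 2) := by
  funext w
  rw [heatKernel]
  ring_nf

lemma integral_heatKernel {t : ℝ} (ht : 0 < t) : ∫ w, heatKernel d t w = 1 := by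
  rw [heatKernel_eq_gaussian, integral_const_mul,
    GaussianFourier.integral_rexp_neg_mul_sq_norm (by positivity), finrank_euclideanSpace_fin,
    show π / (2 * t)⁻¹ = 2 * π * t by field_simp, ← rpow_add (by positivity), neg_div,
    neg_add_cancel, rpow_zero]

lemma integrable_heatKernel {t : ℝ} (ht : 0 < t) : Integrable (heatKernel d t) :=
  .of_integral_ne_zero (by simp [integral_heatKernel ht])

lemma heatKernel_mul_norm_rpow_le (hd : d ≠ 0) {t : ℝ} (ht : 0 < t)
    (w : EuclideanSpace ℝ (Fin d)) :
    heatKernel d t w * ‖w‖ ^ (d : ℝ) ≤ (d / (2 * π)) ^ ((d : ℝ) / 2) := by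
  set k : ℝ := d / 2 with hk_def
  set u : ℝ := ‖w‖ ^ 2 / (2 * t)
  have hk : 0 < k := by positivity
  have hu : 0 ≤ u := by positivity
  have hkernel : heatKernel d t w = exp (-u) / (2 * π * t) ^ k := by
    rw [heatKernel, neg_div, neg_div, rpow_neg (by positivity), inv_mul_eq_div]
  have hnorm : ‖w‖ ^ (d : ℝ) = (2 * t * u) ^ k := by
    rw [mul_div_cancel₀ _ (by positivity), show (d : ℝ) = 2 * k by ring,
      rpow_mul (norm_nonneg w), rpow_two]
  calc heatKernel d t w * ‖w‖ ^ (d : ℝ)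
      = (u / π) ^ k * exp (-u) := by
        rw [hkernel, hnorm, div_mul_eq_mul_div, mul_div_assoc, ← div_rpow (by positivity)
          (by positivity), mul_comm]
        congr 2
        field_simp
    _ ≤ (k ^ k * exp u / π ^ k) * exp (-u) := by
        rw [div_rpow hu pi_pos.le]
        gcongr
        exact rpow_le_rpow_mul_exp hu hk
    _ = (d / (2 * π)) ^ ((d : ℝ) / 2) := by
        rw [div_mul_eq_mul_div, mul_assoc, ← exp_add, add_neg_cancel, exp_zero, mul_one,
          ← div_rpow hk.le pi_pos.le, hk_def]
        ring_nf

lemma heatKernel_le_of_le_norm (hd : d ≠ 0) {t r : ℝ} (ht : 0 < t) (hr : 0 < r)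
    {w : EuclideanSpace ℝ (Fin d)} (hrw : r ≤ ‖w‖) :
    heatKernel d t w ≤ (d / (2 * π)) ^ ((d : ℝ) / 2) * r ^ (-(d : ℝ)) := by
  have hw : 0 < ‖w‖ := hr.trans_le hrw
  calc heatKernel d t w = heatKernel d t w * ‖w‖ ^ (d : ℝ) * ‖w‖ ^ (-(d : ℝ)) := by
        rw [mul_assoc, ← rpow_add hw, add_neg_cancel, rpow_zero, mul_one]
    _ ≤ (d / (2 * π)) ^ ((d : ℝ) / 2) * r ^ (-(d : ℝ)) :=
        mul_le_mul (heatKernel_mul_norm_rpow_le hd ht w)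
          (rpow_le_rpow_of_nonpos hr hrw (neg_nonpos.2 d.cast_nonneg)) (by positivity)
          (by positivity)

lemma heatKernel_sub_mul_norm_sub_rpow_le (hd : d ≠ 0) (hβ : 0 ≤ β) {t r : ℝ} (ht : 0 < t)
    (hr : 0 < r) {a b : EuclideanSpace ℝ (Fin d)} (hab : 2 * r ≤ ‖a - b‖)
    (z : EuclideanSpace ℝ (Fin d)) :
    heatKernel d t (z - a) * ‖z - b‖ ^ (-β)
      ≤ (d / (2 * π)) ^ ((d : ℝ) / 2) * r ^ (-(d : ℝ)) *
          (ball b r).indicator (fun z => ‖z - b‖ ^ (-β)) z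
        + r ^ (-β) * heatKernel d t (z - a) := by
  have hkernel := heatKernel_nonneg ht (z - a)
  by_cases hz : z ∈ ball b r
  · have hza : r ≤ ‖z - a‖ := by
      have := norm_sub_le_norm_sub_add_norm_sub a z b
      rw [mem_ball, dist_eq_norm] at hz
      rw [norm_sub_rev a z] at this
      linarith
    rw [indicator_of_mem hz]
    have := heatKernel_le_of_le_norm hd ht hr hza
    have : 0 ≤ r ^ (-β) * heatKernel d t (z - a) := by positivity
    nlinarith [rpow_nonneg (norm_nonneg (z - b)) (-β)]
  · have hzb : r ≤ ‖z - b‖ := by simpa [dist_eq_norm] using hz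
    rw [indicator_of_notMem hz, mul_zero, zero_add, mul_comm]
    exact mul_le_mul_of_nonneg_right (rpow_le_rpow_of_nonpos hr hzb (by linarith)) hkernel

lemma exists_integral_heatKernel_sub_mul_norm_sub_rpow_le (hβ : 0 < β) (hβd : β < d) :
    ∃ C, 0 < C ∧ ∀ t, 0 < t → ∀ a b : EuclideanSpace ℝ (Fin d), a ≠ b →
      ∫ z, heatKernel d t (z - a) * ‖z - b‖ ^ (-β) ≤ C * ‖a - b‖ ^ (-β) := by
  have hd : d ≠ 0 := (Nat.cast_pos.mp (hβ.trans hβd)).ne'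
  have hβE : β < Module.finrank ℝ (EuclideanSpace ℝ (Fin d)) := by simpa using hβd
  set M := (d / (2 * π)) ^ ((d : ℝ) / 2)
  set K := d / (d - β) * volume.real (ball (0 : EuclideanSpace ℝ (Fin d)) 1)
  have hK : 0 ≤ K := mul_nonneg (div_nonneg d.cast_nonneg (by linarith)) measureReal_nonneg
  refine ⟨(M * K + 1) * 2 ^ β, by positivity, fun t ht a b hab => ?_⟩
  set r := ‖a - b‖ / 2
  have hr : 0 < r := half_pos (norm_pos_iff.2 (sub_ne_zero.2 hab))
  have hball := (integrableOn_ball_norm_sub_rpow_neg volume hβ hβE b hr).integrable_indicator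
    measurableSet_ball
  have hkernel := (integrable_heatKernel (d := d) ht).comp_sub_right a
  calc ∫ z, heatKernel d t (z - a) * ‖z - b‖ ^ (-β)
      ≤ ∫ z, M * r ^ (-(d : ℝ)) * (ball b r).indicator (fun z => ‖z - b‖ ^ (-β)) z
          + r ^ (-β) * heatKernel d t (z - a) :=
        integral_mono_of_nonneg
          (.of_forall fun z => mul_nonneg (heatKernel_nonneg ht _) (by positivity))
          ((hball.const_mul _).add (hkernel.const_mul _))
          (.of_forall (heatKernel_sub_mul_norm_sub_rpow_le hd hβ.le ht hr
            (mul_div_cancel₀ _ two_ne_zero).le))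
    _ = M * r ^ (-(d : ℝ)) * (K * r ^ ((d : ℝ) - β)) + r ^ (-β) := by
        rw [integral_add (hball.const_mul _) (hkernel.const_mul _), integral_const_mul,
          integral_const_mul, integral_indicator measurableSet_ball,
          setIntegral_ball_norm_sub_rpow_neg volume hβ hβE b hr.le,
          integral_sub_right_eq_self (heatKernel d t) a, integral_heatKernel ht,
          finrank_euclideanSpace_fin]
        ring
    _ = (M * K + 1) * r ^ (-β) := by
        rw [mul_mul_mul_comm, ← rpow_add hr]
        ring_nf
    _ = (M * K + 1) * 2 ^ β * ‖a - b‖ ^ (-β) := by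
        rw [div_rpow (norm_nonneg _) zero_le_two, rpow_neg zero_le_two, div_inv_eq_mul]
        ring

lemma box_eq_preimage_closedBall {R : ℝ} (hR : 0 ≤ R) :
    box d R = WithLp.ofLp ⁻¹' closedBall (0 : Fin d → ℝ) R := by
  ext x
  simp [box, pi_norm_le_iff_of_nonneg hR]

lemma volume_box {R : ℝ} (hR : 0 ≤ R) : volume (box d R) = ENNReal.ofReal ((2 * R) ^ d) := by
  rw [box_eq_preimage_closedBall hR, (PiLp.volume_preserving_ofLp _).measure_preimage
    measurableSet_closedBall.nullMeasurableSet, Real.volume_pi_closedBall _ hR, Fintype.card_fin]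

lemma isBounded_box {R : ℝ} (hR : 0 ≤ R) : Bornology.IsBounded (box d R) := by
  rw [box_eq_preimage_closedBall hR]
  exact (PiLp.antilipschitzWith_ofLp 2 _).isBounded_preimage isBounded_closedBall

lemma integrableOn_box_norm_sub_rpow_neg (hβ : 0 < β) (hβd : β < d) {R : ℝ} (hR : 0 ≤ R)
    (a : EuclideanSpace ℝ (Fin d)) : IntegrableOn (fun x => ‖x - a‖ ^ (-β)) (box d R) := by
  obtain ⟨r, hr⟩ := (isBounded_box hR).subset_ball a
  have h0 : (0 : EuclideanSpace ℝ (Fin d)) ∈ box d R := by simp [box, hR]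
  exact (integrableOn_ball_norm_sub_rpow_neg volume hβ (by simpa using hβd) a
    (pos_of_mem_ball (hr h0))).mono_set hr

lemma setIntegral_box_norm_sub_rpow_le (hβ : 0 < β) (hβd : β < d) {R : ℝ} (hR : 0 < R)
    (a : EuclideanSpace ℝ (Fin d)) :
    ∫ x in box d R, ‖x - a‖ ^ (-β)
      ≤ (d / (d - β) * volume.real (ball (0 : EuclideanSpace ℝ (Fin d)) 1) + 2 ^ d)
          * R ^ ((d : ℝ) - β) := by
  have hnear : ∫ x in box d R ∩ ball a R, ‖x - a‖ ^ (-β)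
      ≤ d / (d - β) * volume.real (ball (0 : EuclideanSpace ℝ (Fin d)) 1) * R ^ ((d : ℝ) - β) := by
    calc ∫ x in box d R ∩ ball a R, ‖x - a‖ ^ (-β) ≤ ∫ x in ball a R, ‖x - a‖ ^ (-β) :=
          setIntegral_mono_set
            (integrableOn_ball_norm_sub_rpow_neg volume hβ (by simpa using hβd) a hR)
            (.of_forall fun x => by positivity) inter_subset_right.eventuallyLE
      _ = _ := by
          rw [setIntegral_ball_norm_sub_rpow_neg volume hβ (by simpa using hβd) a hR.le,
            finrank_euclideanSpace_fin]
  have hfar : ∫ x in box d R \ ball a R, ‖x - a‖ ^ (-β) ≤ 2 ^ d * R ^ ((d : ℝ) - β) := by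
    have hvol : volume (box d R \ ball a R) ≤ ENNReal.ofReal ((2 * R) ^ d) :=
      (measure_mono sdiff_subset).trans (volume_box hR.le).le
    calc ∫ x in box d R \ ball a R, ‖x - a‖ ^ (-β)
        ≤ R ^ (-β) * volume.real (box d R \ ball a R) := by
          refine (le_norm_self _).trans (norm_setIntegral_le_of_norm_le_const
            (hvol.trans_lt ENNReal.ofReal_lt_top) fun x hx => ?_)
          rw [norm_of_nonneg (by positivity)]
          exact rpow_le_rpow_of_nonpos hR (by simpa [dist_eq_norm] using hx.2) (by linarith)
      _ ≤ R ^ (-β) * (2 * R) ^ d := by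
          gcongr
          exact ENNReal.toReal_le_of_le_ofReal (by positivity) hvol
      _ = 2 ^ d * R ^ ((d : ℝ) - β) := by
          rw [mul_pow, ← rpow_natCast R, sub_eq_neg_add, rpow_add hR]
          ring
  rw [← integral_inter_add_sdiff measurableSet_ball
    (integrableOn_box_norm_sub_rpow_neg hβ hβd hR.le a), add_mul]
  exact add_le_add hnear hfar

lemma exists_setIntegral_box_integral_heatKernel_mul_le (hβ : 0 < β) (hβd : β < d) :
    ∃ C, 0 < C ∧ ∀ t, 0 < t → ∀ R, 0 < R → ∀ a : EuclideanSpace ℝ (Fin d),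
      ∫ x in box d R, ∫ y, heatKernel d t (x - y) * ‖y - a‖ ^ (-β) ≤ C * R ^ ((d : ℝ) - β) := by
  obtain ⟨C₁, hC₁, hconv⟩ := exists_integral_heatKernel_sub_mul_norm_sub_rpow_le hβ hβd
  set C₂ := d / (d - β) * volume.real (ball (0 : EuclideanSpace ℝ (Fin d)) 1) + 2 ^ d
  have hC₂ : 0 < C₂ := add_pos_of_nonneg_of_pos
    (mul_nonneg (div_nonneg d.cast_nonneg (by linarith)) measureReal_nonneg) (by positivity)
  have : Nonempty (Fin d) := ⟨⟨0, by exact_mod_cast hβ.trans hβd⟩⟩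
  refine ⟨C₁ * C₂, mul_pos hC₁ hC₂, fun t ht R hR a => ?_⟩
  calc ∫ x in box d R, ∫ y, heatKernel d t (x - y) * ‖y - a‖ ^ (-β)
      ≤ ∫ x in box d R, C₁ * ‖x - a‖ ^ (-β) := by
        refine integral_mono_of_nonneg (.of_forall fun x => integral_nonneg fun y =>
          mul_nonneg (heatKernel_nonneg ht _) (by positivity))
          ((integrableOn_box_norm_sub_rpow_neg hβ hβd hR.le a).const_mul C₁)
          (ae_restrict_of_ae ((volume.ae_ne a).mono fun x hx => ?_))
        simp_rw [heatKernel_sub_comm t x]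
        exact hconv t ht x a hx
    _ ≤ C₁ * C₂ * R ^ ((d : ℝ) - β) := by
        rw [integral_const_mul, mul_assoc]
        gcongr
        exact setIntegral_box_norm_sub_rpow_le hβ hβd hR a

end Euclidean

theorem stmt_6_general (d : ℕ) (β : ℝ) (hβ0 : 0 < β) (hβd : β < d) :
    ∃ C : ℝ, 0 < C ∧ ∀ t₁ t₂ : ℝ, 0 < t₁ → 0 < t₂ → ∀ R : ℝ, 0 < R →
      ∀ ytil ztil : EuclideanSpace ℝ (Fin d), ytil ≠ ztil →
      (∫ x in box d R, ∫ y : EuclideanSpace ℝ (Fin d), ∫ z : EuclideanSpace ℝ (Fin d),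
          heatKernel d t₁ (x - y) * heatKernel d t₂ (z - ytil) *
            ‖y - ytil‖ ^ (-β) * ‖z - ztil‖ ^ (-β)) ≤
        C * ‖ytil - ztil‖ ^ (-β) * R ^ ((d : ℝ) - β) := by
  obtain ⟨C₁, hC₁, hconv⟩ := exists_integral_heatKernel_sub_mul_norm_sub_rpow_le hβ0 hβd
  obtain ⟨C₂, hC₂, hbox⟩ := exists_setIntegral_box_integral_heatKernel_mul_le hβ0 hβd
  refine ⟨C₂ * C₁, mul_pos hC₂ hC₁, fun t₁ t₂ ht₁ ht₂ R hR ytil ztil hne => ?_⟩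
  have hfactor : (∫ x in box d R, ∫ y, ∫ z, heatKernel d t₁ (x - y) * heatKernel d t₂ (z - ytil) *
        ‖y - ytil‖ ^ (-β) * ‖z - ztil‖ ^ (-β))
      = (∫ x in box d R, ∫ y, heatKernel d t₁ (x - y) * ‖y - ytil‖ ^ (-β))
        * ∫ z, heatKernel d t₂ (z - ytil) * ‖z - ztil‖ ^ (-β) := by
    simp_rw [← integral_mul_const, ← integral_const_mul]
    congr! 6
    ring
  rw [hfactor]
  calc _ ≤ (C₂ * R ^ ((d : ℝ) - β)) * (C₁ * ‖ytil - ztil‖ ^ (-β)) :=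
        mul_le_mul (hbox t₁ ht₁ R hR ytil) (hconv t₂ ht₂ ytil ztil hne)
          (integral_nonneg fun z => mul_nonneg (heatKernel_nonneg ht₂ _) (by positivity))
          (by positivity)
    _ = C₂ * C₁ * ‖ytil - ztil‖ ^ (-β) * R ^ ((d : ℝ) - β) := by ring

theorem stmt_6 (d : ℕ) (hd : 1 ≤ d) (β : ℝ) (hβ0 : 0 < β) (hβd : β < d) :
    ∃ C : ℝ, 0 < C ∧ ∀ t₁ t₂ : ℝ, 0 < t₁ → 0 < t₂ → ∀ R : ℝ, 0 < R →
      ∀ ytil ztil : EuclideanSpace ℝ (Fin d), ytil ≠ ztil →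
      (∫ x in box d R, ∫ y : EuclideanSpace ℝ (Fin d), ∫ z : EuclideanSpace ℝ (Fin d),
          heatKernel d t₁ (x - y) * heatKernel d t₂ (z - ytil) *
            ‖y - ytil‖ ^ (-β) * ‖z - ztil‖ ^ (-β)) ≤
        C * ‖ytil - ztil‖ ^ (-β) * R ^ ((d : ℝ) - β) :=
  stmt_6_general d β hβ0 hβd
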